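/- arXiv:2605.29500 — 4 statements merged into one kernel-verified Lean document; each statement's English description precedes it below -/
import Mathlib

section
/- Under the setup of the previous statement (finite Ω, pmfs P_π ≪ P_β, map q : Ω → Z, quotient-measurable function G(ω)=g(q(ω))), the variance under P_β of ρ(ω)G(ω) minus the variance under P_β of w(q(ω))g(q(ω)) equals E_β[ g(q(ω))² · Var_β(ρ | q(ω)) ], where Var_β(ρ | q=z) is the conditional variance of ρ given the event {q=z}. In particular this difference is nonnegative (Rao–Blackwell). -/
/-!
`w (q ω)` is the `P_β`-conditional expectation of `ρ` given `q`, so `ρ G` and `w(q) g(q)` have the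
same mean and the variance gap is the gap of second moments. Summing the latter fibre by fibre,
the fibre `{q = z}` contributes `g z ^ 2 * (∑ Pβ ρ² - F_β(z) w(z)²)`, which is `F_β(z) g z ^ 2`
times the weighted variance of `ρ` on that fibre, and weighted variances are sums of squares.
-/

open Finset

section WeightedVariance

variable {ι : Type*} (s : Finset ι) (p f : ι → ℝ)

theorem sum_mul_sub_sq (c : ℝ) :
    ∑ i ∈ s, p i * (f i - c) ^ 2 =
      ∑ i ∈ s, p i * f i ^ 2 - 2 * c * ∑ i ∈ s, p i * f i + c ^ 2 * ∑ i ∈ s, p i := by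
  simp only [mul_sum, ← sum_sub_distrib, ← sum_add_distrib]
  exact sum_congr rfl fun i _ => by ring

theorem sum_mul_sub_mean_sq (hp : ∑ i ∈ s, p i ≠ 0) :
    ∑ i ∈ s, p i * (f i - (∑ j ∈ s, p j * f j) / ∑ j ∈ s, p j) ^ 2 =
      ∑ i ∈ s, p i * f i ^ 2 - (∑ i ∈ s, p i * f i) ^ 2 / ∑ i ∈ s, p i := by
  rw [sum_mul_sub_sq]
  field_simp
  ring

theorem sum_mul_sq_div_sub_sq_nonneg (hp : ∀ i ∈ s, 0 ≤ p i) :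
    0 ≤ (∑ i ∈ s, p i * f i ^ 2) / ∑ i ∈ s, p i -
      ((∑ i ∈ s, p i * f i) / ∑ i ∈ s, p i) ^ 2 := by
  rcases eq_or_ne (∑ i ∈ s, p i) 0 with h | h
  · simp [h]
  calc (0 : ℝ) ≤ (∑ i ∈ s, p i * (f i - (∑ j ∈ s, p j * f j) / ∑ j ∈ s, p j) ^ 2) /
        ∑ i ∈ s, p i :=
      div_nonneg (sum_nonneg fun i hi => mul_nonneg (hp i hi) (sq_nonneg _)) (sum_nonneg hp)
    _ = _ := by rw [sum_mul_sub_mean_sq s p f h]; field_simp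

theorem sum_mul_eq_zero_of_sum_eq_zero (hp : ∀ i ∈ s, 0 ≤ p i) (h0 : ∑ i ∈ s, p i = 0) :
    ∑ i ∈ s, p i * f i = 0 :=
  sum_eq_zero fun i hi => by rw [(sum_eq_zero_iff_of_nonneg hp).mp h0 i hi, zero_mul]

end WeightedVariance

theorem mul_ite_div_of_imp {G₀ : Type*} [CommGroupWithZero G₀] [DecidableEq G₀] {a b : G₀}
    (h : b = 0 → a = 0) : b * (if b = 0 then 0 else a / b) = a := by
  split_ifs with hb
  · simp [hb, h hb]
  · exact mul_div_cancel_of_imp' h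

section Fibres

variable {Ω Z : Type*} [Fintype Ω] [Fintype Z] [DecidableEq Z] (q : Ω → Z)

def weightedVariance (p f : Ω → ℝ) : ℝ :=
  ∑ ω, p ω * (f ω - ∑ ω', p ω' * f ω') ^ 2

theorem weightedVariance_eq_sub_sq {p : Ω → ℝ} (hp : ∑ ω, p ω = 1) (f : Ω → ℝ) :
    weightedVariance p f = ∑ ω, p ω * f ω ^ 2 - (∑ ω, p ω * f ω) ^ 2 := by
  simpa [weightedVariance, hp] using sum_mul_sub_mean_sq univ p f (by simp [hp])

theorem sum_mul_comp_eq_sum_fiber (a : Ω → ℝ) (h : Z → ℝ) :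
    ∑ ω, a ω * h (q ω) = ∑ z, (∑ ω ∈ univ.filter (fun ω => q ω = z), a ω) * h z := by
  rw [← sum_fiberwise univ q]
  refine sum_congr rfl fun z _ => ?_
  rw [sum_mul]
  exact sum_congr rfl fun ω hω => by rw [(mem_filter.mp hω).2]

/-- Replacing `a` by its fibrewise mean `m ∘ q` keeps the mean of `a * g ∘ q`, so only the second
moments change. -/
theorem weightedVariance_sub_comp_fiberMean {p : Ω → ℝ} (hp : ∑ ω, p ω = 1) (a : Ω → ℝ)
    (m g : Z → ℝ) (hm : ∀ z, (∑ ω ∈ univ.filter (fun ω => q ω = z), p ω) * m z =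
      ∑ ω ∈ univ.filter (fun ω => q ω = z), p ω * a ω) :
    weightedVariance p (fun ω => a ω * g (q ω)) -
        weightedVariance p (fun ω => m (q ω) * g (q ω)) =
      ∑ z, g z ^ 2 * (∑ ω ∈ univ.filter (fun ω => q ω = z), p ω * a ω ^ 2 -
        (∑ ω ∈ univ.filter (fun ω => q ω = z), p ω) * m z ^ 2) := by
  have hmean : ∑ ω, p ω * (a ω * g (q ω)) = ∑ ω, p ω * (m (q ω) * g (q ω)) := by
    rw [sum_mul_comp_eq_sum_fiber q p fun z => m z * g z]
    simp only [← mul_assoc, hm]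
    rw [sum_mul_comp_eq_sum_fiber]
  have hsecond : ∑ ω, p ω * (a ω * g (q ω)) ^ 2 =
      ∑ z, (∑ ω ∈ univ.filter (fun ω => q ω = z), p ω * a ω ^ 2) * g z ^ 2 := by
    simp only [mul_pow, ← mul_assoc]
    rw [sum_mul_comp_eq_sum_fiber q _ fun z => g z ^ 2]
  rw [weightedVariance_eq_sub_sq hp, weightedVariance_eq_sub_sq hp, hmean, hsecond,
    sum_mul_comp_eq_sum_fiber q p fun z => (m z * g z) ^ 2, sub_sub_sub_cancel_right,
    ← sum_sub_distrib]
  exact sum_congr rfl fun z _ => by ring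

end Fibres

theorem stmt_3_general {Ω Z : Type*} [Fintype Ω] [Fintype Z] [DecidableEq Z]
    (Pπ Pβ : Ω → ℝ)
    (hβ0 : ∀ ω, 0 ≤ Pβ ω)
    (hβ1 : ∑ ω, Pβ ω = 1)
    (hac : ∀ ω, Pβ ω = 0 → Pπ ω = 0)
    (q : Ω → Z) (g : Z → ℝ)
    (Fπ Fβ : Z → ℝ)
    (hFπ : ∀ z, Fπ z = ∑ ω ∈ univ.filter (fun ω => q ω = z), Pπ ω)
    (hFβ : ∀ z, Fβ z = ∑ ω ∈ univ.filter (fun ω => q ω = z), Pβ ω)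
    (ρ : Ω → ℝ)
    (hρ : ∀ ω, ρ ω = if Pβ ω = 0 then 0 else Pπ ω / Pβ ω)
    (w : Z → ℝ)
    (hw : ∀ z, w z = if Fβ z = 0 then 0 else Fπ z / Fβ z)
    -- expectation and variance under `Pβ`
    (E : (Ω → ℝ) → ℝ) (hE : ∀ f, E f = ∑ ω, Pβ ω * f ω)
    (V : (Ω → ℝ) → ℝ) (hV : ∀ f, V f = E (fun ω => (f ω - E f) ^ 2))
    -- conditional variance of ρ given {q = z}, for F_β(z) > 0
    (cvar : Z → ℝ)
    (hcvar : ∀ z, 0 < Fβ z →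
      cvar z =
        (∑ ω ∈ univ.filter (fun ω => q ω = z), Pβ ω * ρ ω ^ 2) / Fβ z -
        ((∑ ω ∈ univ.filter (fun ω => q ω = z), Pβ ω * ρ ω) / Fβ z) ^ 2) :
    V (fun ω => ρ ω * g (q ω)) - V (fun ω => w (q ω) * g (q ω)) =
      ∑ z ∈ univ.filter (fun z => 0 < Fβ z), Fβ z * (g z ^ 2 * cvar z) ∧
    0 ≤ V (fun ω => ρ ω * g (q ω)) - V (fun ω => w (q ω) * g (q ω)) := by
  have hβρ : ∀ ω, Pβ ω * ρ ω = Pπ ω := fun ω => by rw [hρ, mul_ite_div_of_imp (hac ω)]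
  have hFπρ : ∀ z, Fπ z = ∑ ω ∈ univ.filter (fun ω => q ω = z), Pβ ω * ρ ω := by
    simp only [hFπ, hβρ, implies_true]
  have hFβw : ∀ z, Fβ z * w z = Fπ z := fun z => by
    refine hw z ▸ mul_ite_div_of_imp fun hz => ?_
    rw [hFπρ]
    exact sum_mul_eq_zero_of_sum_eq_zero _ _ _ (fun ω _ => hβ0 ω) (hFβ z ▸ hz)
  have hgap : V (fun ω => ρ ω * g (q ω)) - V (fun ω => w (q ω) * g (q ω)) =
      ∑ z ∈ univ.filter (fun z => 0 < Fβ z), Fβ z * (g z ^ 2 * cvar z) := by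
    have hVw : ∀ f, V f = weightedVariance Pβ f := fun f => by
      simp only [hV, hE, weightedVariance]
    rw [hVw, hVw,
      weightedVariance_sub_comp_fiberMean q hβ1 ρ w g fun z => by rw [← hFβ, hFβw, hFπρ],
      sum_filter]
    refine sum_congr rfl fun z _ => ?_
    rw [← hFβ z]
    split_ifs with hpos
    · rw [hcvar z hpos, ← hFπρ, hw, if_neg hpos.ne']
      field_simp
    · have hz : Fβ z = 0 := le_antisymm (not_lt.mp hpos) (hFβ z ▸ sum_nonneg fun ω _ => hβ0 ω)
      rw [hz, sum_mul_eq_zero_of_sum_eq_zero _ _ _ (fun ω _ => hβ0 ω) (hFβ z ▸ hz)]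
      ring
  refine ⟨hgap, hgap ▸ sum_nonneg fun z hz => ?_⟩
  have hpos := (mem_filter.mp hz).2
  have hcvar_nonneg : 0 ≤ cvar z := by
    rw [hcvar z hpos, hFβ z]
    exact sum_mul_sq_div_sub_sq_nonneg _ _ _ fun ω _ => hβ0 ω
  exact mul_nonneg hpos.le (mul_nonneg (sq_nonneg _) hcvar_nonneg)

/-- exact variance gap on a quotient (Rao–Blackwell):
`Var_β(ρ G) − Var_β(w(q) g(q)) = E_β[g(q)² Var_β(ρ | q)] ≥ 0`. -/
theorem stmt_3 {Ω Z : Type*} [Fintype Ω] [Fintype Z] [DecidableEq Z]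
    (Pπ Pβ : Ω → ℝ)
    (hπ0 : ∀ ω, 0 ≤ Pπ ω) (hβ0 : ∀ ω, 0 ≤ Pβ ω)
    (hπ1 : ∑ ω, Pπ ω = 1) (hβ1 : ∑ ω, Pβ ω = 1)
    (hac : ∀ ω, Pβ ω = 0 → Pπ ω = 0)
    (q : Ω → Z) (g : Z → ℝ)
    (Fπ Fβ : Z → ℝ)
    (hFπ : ∀ z, Fπ z = ∑ ω ∈ univ.filter (fun ω => q ω = z), Pπ ω)
    (hFβ : ∀ z, Fβ z = ∑ ω ∈ univ.filter (fun ω => q ω = z), Pβ ω)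
    (ρ : Ω → ℝ)
    (hρ : ∀ ω, ρ ω = if Pβ ω = 0 then 0 else Pπ ω / Pβ ω)
    (w : Z → ℝ)
    (hw : ∀ z, w z = if Fβ z = 0 then 0 else Fπ z / Fβ z)
    -- expectation and variance under `Pβ`
    (E : (Ω → ℝ) → ℝ) (hE : ∀ f, E f = ∑ ω, Pβ ω * f ω)
    (V : (Ω → ℝ) → ℝ) (hV : ∀ f, V f = E (fun ω => (f ω - E f) ^ 2))
    -- conditional variance of ρ given {q = z}, for F_β(z) > 0
    (cvar : Z → ℝ)
    (hcvar : ∀ z, 0 < Fβ z →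
      cvar z =
        (∑ ω ∈ univ.filter (fun ω => q ω = z), Pβ ω * ρ ω ^ 2) / Fβ z -
        ((∑ ω ∈ univ.filter (fun ω => q ω = z), Pβ ω * ρ ω) / Fβ z) ^ 2) :
    V (fun ω => ρ ω * g (q ω)) - V (fun ω => w (q ω) * g (q ω)) =
      ∑ z ∈ univ.filter (fun z => 0 < Fβ z), Fβ z * (g z ^ 2 * cvar z) ∧
    0 ≤ V (fun ω => ρ ω * g (q ω)) - V (fun ω => w (q ω) * g (q ω)) :=
  stmt_3_general Pπ Pβ hβ0 hβ1 hac q g Fπ Fβ hFπ hFβ ρ hρ w hw E hE V hV cvar hcvar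
end

section
/- Let X, W, R be random variables on a finite probability space with R² integrable, and suppose E[ρ | X] = W where W is X-measurable (a function of X) and R is conditionally independent of ρ given X with E[R | X, ρ] = E[R | X]. Then E[(ρ R − W R)² ] = E[ R'² · Var(ρ | X) ] where R'² = E[R² | X]; equivalently, Var(ρR) − Var(WR) = E[E[R²|X] · Var(ρ|X)]. -/
/-!
Write `ρR = W(X)R + D` with `D = (ρ - W(X))R`. On each fiber `{X = x}` conditional independence
gives `E[g(R)(ρ - W(x)) | x] = E[g(R) | x] (E[ρ | x] - W(x)) = 0`, so `D` is orthogonal to every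
function of `(X, R)`, in particular to `1` and to `W(X)R`. Hence `Var(ρR) = Var(W(X)R) + E[D²]`,
and independence once more gives `E[D² | x] = E[R² | x] Var(ρ | x)`.
-/

open Finset

noncomputable section

section WeightedMean

variable {Ω : Type*} [Fintype Ω] (P : Ω → ℝ)

def wmean (f : Ω → ℝ) : ℝ := ∑ ω, P ω * f ω

def wvar (f : Ω → ℝ) : ℝ := wmean P fun ω => (f ω - wmean P f) ^ 2

variable {P}

theorem wvar_eq_wmean_sq_sub_sq (hP1 : ∑ ω, P ω = 1) (f : Ω → ℝ) :
    wvar P f = wmean P (fun ω => f ω ^ 2) - wmean P f ^ 2 := by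
  have expand : ∀ ω, P ω * (f ω - wmean P f) ^ 2
      = P ω * f ω ^ 2 - 2 * wmean P f * (P ω * f ω) + wmean P f ^ 2 * P ω := fun ω => by ring
  rw [wvar, wmean, sum_congr rfl fun ω _ => expand ω, sum_add_distrib, sum_sub_distrib,
    ← mul_sum, ← mul_sum, hP1, ← wmean, ← wmean]
  ring

theorem wvar_add_sub_wvar_of_orthogonal (hP1 : ∑ ω, P ω = 1) {Y D : Ω → ℝ}
    (hD : wmean P D = 0) (hYD : wmean P (fun ω => Y ω * D ω) = 0) :
    wvar P (fun ω => Y ω + D ω) - wvar P Y = wmean P fun ω => D ω ^ 2 := by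
  have hsum : wmean P (fun ω => Y ω + D ω) = wmean P Y := by
    simp only [wmean, mul_add, sum_add_distrib] at hD ⊢
    rw [hD, add_zero]
  have hsq : wmean P (fun ω => (Y ω + D ω) ^ 2)
      = wmean P (fun ω => Y ω ^ 2) + 2 * wmean P (fun ω => Y ω * D ω)
        + wmean P fun ω => D ω ^ 2 := by
    simp only [wmean, mul_sum, ← sum_add_distrib]
    exact sum_congr rfl fun ω _ => by ring
  rw [wvar_eq_wmean_sq_sub_sq hP1, wvar_eq_wmean_sq_sub_sq hP1, hsum, hsq, hYD]
  ring

end WeightedMean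

section Fibers

variable {Ω 𝒳 : Type*} [Fintype Ω] [DecidableEq 𝒳] (P : Ω → ℝ) (X : Ω → 𝒳)

def fiberMass (x : 𝒳) : ℝ := ∑ ω ∈ univ.filter (fun ω => X ω = x), P ω

def fiberMean (f : Ω → ℝ) (x : 𝒳) : ℝ :=
  (∑ ω ∈ univ.filter (fun ω => X ω = x), P ω * f ω) / fiberMass P X x

variable {P X}

theorem wmean_eq_sum_fiberMass_mul_fiberMean [Fintype 𝒳] (hP0 : ∀ ω, 0 ≤ P ω) (f : Ω → ℝ) :
    wmean P f = ∑ x ∈ univ.filter (fun x => 0 < fiberMass P X x),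
      fiberMass P X x * fiberMean P X f x := by
  have null_fiber : ∀ x, ¬ 0 < fiberMass P X x →
      ∀ ω ∈ univ.filter (fun ω => X ω = x), P ω = 0 := fun x hx =>
    (sum_eq_zero_iff_of_nonneg fun ω _ => hP0 ω).1
      (le_antisymm (not_lt.1 hx) (sum_nonneg fun ω _ => hP0 ω))
  rw [wmean, ← sum_fiberwise univ X, ← sum_subset (filter_subset _ univ)
    fun x _ hx => sum_eq_zero fun ω hω => by
      rw [null_fiber x (fun h => hx (mem_filter.2 ⟨mem_univ _, h⟩)) ω hω, zero_mul]]
  exact sum_congr rfl fun x hx => (mul_div_cancel₀ _ (mem_filter.1 hx).2.ne').symm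

variable {x : 𝒳}

theorem fiberMean_congr {f g : Ω → ℝ} (h : ∀ ω, X ω = x → f ω = g ω) :
    fiberMean P X f x = fiberMean P X g x := by
  unfold fiberMean
  rw [sum_congr rfl fun ω hω => by rw [h ω (mem_filter.1 hω).2]]

theorem fiberMean_sub_const (hx : fiberMass P X x ≠ 0) (f : Ω → ℝ) (c : ℝ) :
    fiberMean P X (fun ω => f ω - c) x = fiberMean P X f x - c := by
  simp only [fiberMean, mul_sub, sum_sub_distrib, ← sum_mul, ← fiberMass.eq_1]
  field_simp

theorem fiberMean_sub_fiberMean_sq (hx : fiberMass P X x ≠ 0) (f : Ω → ℝ) :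
    fiberMean P X (fun ω => (f ω - fiberMean P X f x) ^ 2) x
      = fiberMean P X (fun ω => f ω ^ 2) x - fiberMean P X f x ^ 2 := by
  set c := fiberMean P X f x
  have expand : ∀ ω, P ω * (f ω - c) ^ 2 = P ω * f ω ^ 2 - 2 * c * (P ω * f ω) + c ^ 2 * P ω :=
    fun ω => by ring
  have hc : ∑ ω ∈ univ.filter (fun ω => X ω = x), P ω * f ω = c * fiberMass P X x := by
    simp only [c, fiberMean, div_mul_cancel₀ _ hx]
  simp only [fiberMean, expand, sum_add_distrib, sum_sub_distrib, ← mul_sum, ← fiberMass.eq_1, hc]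
  field_simp
  ring

end Fibers

section NuisanceVariance

variable {Ω 𝒳 : Type*} [Fintype Ω] [DecidableEq 𝒳]

def FiberwiseIndep (P : Ω → ℝ) (X : Ω → 𝒳) (ρ R : Ω → ℝ) : Prop :=
  ∀ x, 0 < fiberMass P X x → ∀ f g : ℝ → ℝ,
    fiberMean P X (fun ω => f (ρ ω) * g (R ω)) x
      = fiberMean P X (fun ω => f (ρ ω)) x * fiberMean P X (fun ω => g (R ω)) x

variable {P : Ω → ℝ} {X : Ω → 𝒳} {ρ R : Ω → ℝ} {W : 𝒳 → ℝ}

theorem wmean_mul_sub_condMean_eq_zero [Fintype 𝒳]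
    (hW : ∀ x, 0 < fiberMass P X x → fiberMean P X ρ x = W x) (hindep : FiberwiseIndep P X ρ R)
    (hP0 : ∀ ω, 0 ≤ P ω) (g : 𝒳 → ℝ → ℝ) :
    wmean P (fun ω => g (X ω) (R ω) * (ρ ω - W (X ω))) = 0 := by
  rw [wmean_eq_sum_fiberMass_mul_fiberMean (X := X) hP0]
  refine sum_eq_zero fun x hx => ?_
  have hx : 0 < fiberMass P X x := (mem_filter.1 hx).2
  rw [fiberMean_congr (g := fun ω => (fun t => t - W x) (ρ ω) * g x (R ω)) fun ω hω => by
      rw [hω, mul_comm], hindep x hx (fun t => t - W x) (g x), fiberMean_sub_const hx.ne',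
    hW x hx, sub_self, zero_mul, mul_zero]

theorem fiberMean_sq_mul_sub_condMean
    (hW : ∀ x, 0 < fiberMass P X x → fiberMean P X ρ x = W x) (hindep : FiberwiseIndep P X ρ R)
    {x : 𝒳} (hx : 0 < fiberMass P X x) :
    fiberMean P X (fun ω => (ρ ω * R ω - W (X ω) * R ω) ^ 2) x
      = fiberMean P X (fun ω => R ω ^ 2) x
        * (fiberMean P X (fun ω => ρ ω ^ 2) x - fiberMean P X ρ x ^ 2) := by
  rw [fiberMean_congr (g := fun ω => (fun t => (t - fiberMean P X ρ x) ^ 2) (ρ ω)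
      * (fun t => t ^ 2) (R ω)) fun ω hω => by rw [hω, hW x hx]; ring,
    hindep x hx (fun t => (t - fiberMean P X ρ x) ^ 2) fun t => t ^ 2,
    fiberMean_sub_fiberMean_sq hx.ne', mul_comm]

end NuisanceVariance

end

theorem stmt_11_general {Ω 𝒳 : Type*} [Fintype Ω] [Fintype 𝒳] [DecidableEq 𝒳]
    (P : Ω → ℝ) (hP0 : ∀ ω, 0 ≤ P ω) (hP1 : ∑ ω, P ω = 1)
    (X : Ω → 𝒳) (ρ R : Ω → ℝ)
    (W : 𝒳 → ℝ)
    -- expectation under P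
    (E : (Ω → ℝ) → ℝ) (hE : ∀ f, E f = ∑ ω, P ω * f ω)
    -- variance under P
    (V : (Ω → ℝ) → ℝ) (hV : ∀ f, V f = E (fun ω => (f ω - E f) ^ 2))
    -- mass of each fiber of X
    (m : 𝒳 → ℝ) (hm : ∀ x, m x = ∑ ω ∈ univ.filter (fun ω => X ω = x), P ω)
    -- conditional expectation given {X = x}
    (cE : (Ω → ℝ) → 𝒳 → ℝ)
    (hcE : ∀ f x, cE f x =
      (∑ ω ∈ univ.filter (fun ω => X ω = x), P ω * f ω) / m x)
    -- E[ρ | X] = W(X)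
    (hW : ∀ x, 0 < m x → cE ρ x = W x)
    -- conditional independence of ρ and R given X
    (hindep : ∀ x, 0 < m x → ∀ f g : ℝ → ℝ,
      cE (fun ω => f (ρ ω) * g (R ω)) x = cE (fun ω => f (ρ ω)) x * cE (fun ω => g (R ω)) x) :
    E (fun ω => (ρ ω * R ω - W (X ω) * R ω) ^ 2) =
      ∑ x ∈ univ.filter (fun x => 0 < m x),
        m x * (cE (fun ω => R ω ^ 2) x *
          (cE (fun ω => ρ ω ^ 2) x - (cE ρ x) ^ 2)) ∧
    V (fun ω => ρ ω * R ω) - V (fun ω => W (X ω) * R ω) =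
      ∑ x ∈ univ.filter (fun x => 0 < m x),
        m x * (cE (fun ω => R ω ^ 2) x *
          (cE (fun ω => ρ ω ^ 2) x - (cE ρ x) ^ 2)) := by
  obtain rfl : m = fiberMass P X := funext hm
  obtain rfl : cE = fiberMean P X := funext fun f => funext (hcE f)
  obtain rfl : E = wmean P := funext hE
  obtain rfl : V = wvar P := funext hV
  have gap : wmean P (fun ω => (ρ ω * R ω - W (X ω) * R ω) ^ 2) = _ :=
    (wmean_eq_sum_fiberMass_mul_fiberMean hP0 _).trans <| sum_congr rfl fun x hx => by
      rw [fiberMean_sq_mul_sub_condMean hW hindep (mem_filter.1 hx).2]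
  refine ⟨gap, gap ▸ ?_⟩
  have orthogonal := wmean_mul_sub_condMean_eq_zero hW hindep hP0
  have variance_gap := wvar_add_sub_wvar_of_orthogonal hP1 (Y := fun ω => W (X ω) * R ω)
    (D := fun ω => ρ ω * R ω - W (X ω) * R ω)
    (by simpa only [mul_sub, mul_comm] using orthogonal fun _ r => r)
    (by simpa only [mul_sub, mul_comm, mul_left_comm, mul_assoc] using
      orthogonal fun x r => W x * r * r)
  simpa only [add_sub_cancel] using variance_gap

/-- ordering-nuisance variance gap. If `E[ρ | X] = W(X)` and `R`
is conditionally independent of `ρ` given `X`, then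
`E[(ρR − W(X)R)²] = E[E[R²|X]·Var(ρ|X)]` and
`Var(ρR) − Var(W(X)R) = E[E[R²|X]·Var(ρ|X)]`. -/
theorem stmt_11 {Ω 𝒳 : Type*} [Fintype Ω] [Fintype 𝒳] [DecidableEq 𝒳]
    (P : Ω → ℝ) (hP0 : ∀ ω, 0 ≤ P ω) (hP1 : ∑ ω, P ω = 1)
    (X : Ω → 𝒳) (ρ R : Ω → ℝ) (hρ0 : ∀ ω, 0 ≤ ρ ω)
    (W : 𝒳 → ℝ)
    -- expectation under P
    (E : (Ω → ℝ) → ℝ) (hE : ∀ f, E f = ∑ ω, P ω * f ω)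
    -- variance under P
    (V : (Ω → ℝ) → ℝ) (hV : ∀ f, V f = E (fun ω => (f ω - E f) ^ 2))
    -- mass of each fiber of X
    (m : 𝒳 → ℝ) (hm : ∀ x, m x = ∑ ω ∈ univ.filter (fun ω => X ω = x), P ω)
    -- conditional expectation given {X = x}
    (cE : (Ω → ℝ) → 𝒳 → ℝ)
    (hcE : ∀ f x, cE f x =
      (∑ ω ∈ univ.filter (fun ω => X ω = x), P ω * f ω) / m x)
    -- E[ρ | X] = W(X)
    (hW : ∀ x, 0 < m x → cE ρ x = W x)
    -- conditional independence of ρ and R given X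
    (hindep : ∀ x, 0 < m x → ∀ f g : ℝ → ℝ,
      cE (fun ω => f (ρ ω) * g (R ω)) x = cE (fun ω => f (ρ ω)) x * cE (fun ω => g (R ω)) x) :
    E (fun ω => (ρ ω * R ω - W (X ω) * R ω) ^ 2) =
      ∑ x ∈ univ.filter (fun x => 0 < m x),
        m x * (cE (fun ω => R ω ^ 2) x *
          (cE (fun ω => ρ ω ^ 2) x - (cE ρ x) ^ 2)) ∧
    V (fun ω => ρ ω * R ω) - V (fun ω => W (X ω) * R ω) =
      ∑ x ∈ univ.filter (fun x => 0 < m x),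
        m x * (cE (fun ω => R ω ^ 2) x *
          (cE (fun ω => ρ ω ^ 2) x - (cE ρ x) ^ 2)) :=
  stmt_11_general P hP0 hP1 X ρ R W E hE V hV m hm cE hcE hW hindep
end

section
/- Fix integers 0 < K < M and a K-element subset S_K of {1,…,M}. Consider deterministic algorithms that, given oracle access to the next-item distributions μ(·|S) of an arbitrary set-sufficient policy at subsets S ⊆ {1,…,M}, must output the exact value μ(S_K). If such an algorithm fails to query some proper subset U ⊊ S_K, then there exist two set-sufficient policies μ₁, μ₂ that agree on all subsets other than U but satisfy μ₁(S_K) ≠ μ₂(S_K). Hence every exact deterministic algorithm must query all 2^K − 1 proper subsets of S_K in the worst case. -/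
/-!
A deterministic policy `g` (always picking the item `g S` after having picked `S`) generates a
slate `S` with propensity `1` if its run has picked exactly `S` after `|S|` steps, and `0`
otherwise. Let `g` pick greedily by a rank that puts `U` first, then `SK \ U`, then the rest:
its run passes through `U` and reaches `SK`, so `SK` has propensity `1`. Redirecting the choice
at `U` alone to an item `b ∉ SK` (one exists as `K < M`) makes the run pick `b`, so `SK` then has
propensity `0`.
-/

open Finset

/-- Probability of generating the ordered sequence `σ` under the
set-sufficient policy `μ`. -/
noncomputable def seqProb {M : ℕ} (μ : Finset (Fin M) → Fin M → ℝ)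
    {k : ℕ} (σ : Fin k → Fin M) : ℝ :=
  ∏ t : Fin k, μ ((univ.filter (fun u : Fin k => u < t)).image σ) (σ t)

/-- Unordered slate propensity. -/
noncomputable def setProb {M : ℕ} (μ : Finset (Fin M) → Fin M → ℝ)
    (S : Finset (Fin M)) : ℝ :=
  ∑ σ ∈ (univ : Finset (Fin S.card → Fin M)).filter
      (fun σ => univ.image σ = S),
    seqProb μ σ

/-- A set-sufficient policy: at each picked set `S` of size `< K`, a pmf on the
remaining items. -/
def IsSetSufficientPolicy {M : ℕ} (K : ℕ)
    (μ : Finset (Fin M) → Fin M → ℝ) : Prop :=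
  ∀ S : Finset (Fin M), S.card < K →
    (∀ a, 0 ≤ μ S a) ∧ (∑ a ∈ Sᶜ, μ S a = 1)

namespace SetSufficient

section Trajectory

variable {α : Type*} [DecidableEq α] (g : Finset α → α)

def trajectory : ℕ → Finset α
  | 0 => ∅
  | n + 1 => insert (g (trajectory n)) (trajectory n)

lemma trajectory_mono : Monotone (trajectory g) :=
  monotone_nat_of_le_succ fun _ => subset_insert _ _

lemma trajectory_eq_image_range (n : ℕ) :
    trajectory g n = (range n).image fun i => g (trajectory g i) := by
  induction n with
  | zero => rfl
  | succ n ih => rw [range_add_one, image_insert, ← ih]; rfl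

variable {g}

lemma image_eq_trajectory {k : ℕ} {σ : Fin k → α} {s : Finset (Fin k)} {n : ℕ}
    (hs : s.map Fin.valEmbedding = range n) (hσ : ∀ t ∈ s, σ t = g (trajectory g t)) :
    s.image σ = trajectory g n := by
  rw [trajectory_eq_image_range, ← hs, map_eq_image, image_image]
  exact image_congr hσ

lemma mem_trajectory_update {U : Finset α} {b : α} {n m : ℕ}
    (hbefore : ∀ i < n, trajectory g i ≠ U) (hn : trajectory g n = U) (hnm : n < m) :
    b ∈ trajectory (Function.update g U b) m := by
  have hagree : ∀ i ≤ n, trajectory (Function.update g U b) i = trajectory g i := by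
    intro i hi
    induction i with
    | zero => rfl
    | succ i ih =>
      simp only [trajectory, ih (by omega),
        Function.update_of_ne (hbefore i (by omega))]
  refine trajectory_mono _ (Nat.succ_le_of_lt hnm) ?_
  simp [trajectory, hagree n le_rfl, hn]

end Trajectory

section Greedy

variable {α : Type*} [Fintype α] [DecidableEq α] (r : α → ℕ) (d : α)

noncomputable def greedy (S : Finset α) : α :=
  if h : Sᶜ.Nonempty then Function.argminOn r (↑Sᶜ : Set α) (coe_nonempty.mpr h) else d

variable {r d}

lemma greedy_notMem {S : Finset α} (h : Sᶜ.Nonempty) : greedy r d S ∉ S := by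
  rw [greedy, dif_pos h]
  exact mem_compl.mp (Function.argminOn_mem r (↑Sᶜ : Set α) (coe_nonempty.mpr h))

lemma greedy_le {S : Finset α} {a : α} (ha : a ∉ S) : r (greedy r d S) ≤ r a := by
  have h : Sᶜ.Nonempty := ⟨a, mem_compl.mpr ha⟩
  rw [greedy, dif_pos h]
  exact Function.argminOn_le r (↑Sᶜ : Set α) (by simpa using ha)

lemma trajectory_greedy_subset {A : Finset α} (hA : ∀ a ∈ A, ∀ c ∉ A, r a < r c) {n : ℕ}
    (hn : n ≤ A.card) : trajectory (greedy r d) n ⊆ A ∧ (trajectory (greedy r d) n).card = n := by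
  induction n with
  | zero => simp [trajectory]
  | succ n ih =>
    obtain ⟨hsub, hcard⟩ := ih (by omega)
    obtain ⟨a, haA, haT⟩ : ∃ a ∈ A, a ∉ trajectory (greedy r d) n :=
      not_subset.mp fun h => by have := card_le_card h; omega
    have hnew : greedy r d (trajectory (greedy r d) n) ∈ A := by
      by_contra hc
      exact absurd (greedy_le haT) (not_le.mpr (hA a haA _ hc))
    refine ⟨insert_subset hnew hsub, ?_⟩
    rw [trajectory, card_insert_of_notMem (greedy_notMem ⟨a, mem_compl.mpr haT⟩), hcard]

lemma trajectory_greedy_card_eq {A : Finset α} (hA : ∀ a ∈ A, ∀ c ∉ A, r a < r c) :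
    trajectory (greedy r d) A.card = A :=
  have h := trajectory_greedy_subset (d := d) hA le_rfl
  eq_of_subset_of_card_le h.1 h.2.ge

end Greedy

section Policy

variable {M : ℕ}

def detPolicy (g : Finset (Fin M) → Fin M) : Finset (Fin M) → Fin M → ℝ :=
  fun S a => if a = g S then 1 else 0

lemma isSetSufficientPolicy_detPolicy {K : ℕ} {g : Finset (Fin M) → Fin M}
    (hg : ∀ S : Finset (Fin M), S.card < K → g S ∉ S) :
    IsSetSufficientPolicy K (detPolicy g) := by
  intro S hS
  refine ⟨fun a => by unfold detPolicy; split_ifs <;> norm_num, ?_⟩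
  simp [detPolicy, hg S hS]

lemma seqProb_detPolicy (g : Finset (Fin M) → Fin M) {k : ℕ} (σ : Fin k → Fin M) :
    seqProb (detPolicy g) σ = if σ = (fun t : Fin k => g (trajectory g t)) then 1 else 0 := by
  simp only [seqProb, detPolicy, prod_boole, mem_univ, true_implies, filter_gt_eq_Iio]
  congr 1
  have hIio (t : Fin k) : (Iio t).map Fin.valEmbedding = range t := by
    rw [Fin.map_valEmbedding_Iio, Nat.Iio_eq_range]
  refine propext ⟨fun hσ => funext fun t => ?_, fun hσ t => ?_⟩
  · induction t using WellFoundedLT.induction with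
    | _ t ih => rw [hσ t, image_eq_trajectory (hIio t) fun s hs => ih s (mem_Iio.mp hs)]
  · subst hσ
    rw [image_eq_trajectory (hIio t) fun _ _ => rfl]

lemma setProb_detPolicy (g : Finset (Fin M) → Fin M) (S : Finset (Fin M)) :
    setProb (detPolicy g) S = if trajectory g S.card = S then 1 else 0 := by
  have hrun : univ.image (fun t : Fin S.card => g (trajectory g t)) = trajectory g S.card :=
    image_eq_trajectory (by rw [Fin.map_valEmbedding_univ, Nat.Iio_eq_range]) fun _ _ => rfl
  simp only [setProb, seqProb_detPolicy, sum_ite_eq', mem_filter, mem_univ, true_and, hrun]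

end Policy

end SetSufficient

open SetSufficient

theorem stmt_13_general {M K : ℕ} (hKM : K < M)
    (SK : Finset (Fin M)) (hSK : SK.card = K)
    (U : Finset (Fin M)) (hU : U ⊂ SK) :
    ∃ μ₁ μ₂ : Finset (Fin M) → Fin M → ℝ,
      IsSetSufficientPolicy K μ₁ ∧ IsSetSufficientPolicy K μ₂ ∧
      (∀ S : Finset (Fin M), S ≠ U → ∀ a, μ₁ S a = μ₂ S a) ∧
      setProb μ₁ SK ≠ setProb μ₂ SK := by
  have hfree (S : Finset (Fin M)) (hS : S.card < M) : Sᶜ.Nonempty := by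
    rw [← card_pos, card_compl, Fintype.card_fin]; omega
  obtain ⟨b, hb⟩ := hfree SK (hSK ▸ hKM)
  rw [mem_compl] at hb
  have hbU : b ∉ U := fun h => hb (hU.subset h)
  -- rank `0` on `U`, `1` on `SK \ U`, `2` outside `SK`
  let r : Fin M → ℕ := fun a => (if a ∈ U then 0 else 1) + (if a ∈ SK then 0 else 1)
  have hU_first : ∀ a ∈ U, ∀ c ∉ U, r a < r c := by
    intro a ha c hc; simp [r, ha, hU.subset ha, hc]
  have hSK_first : ∀ a ∈ SK, ∀ c ∉ SK, r a < r c := by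
    intro a ha c hc
    have hcU : c ∉ U := fun h => hc (hU.subset h)
    simp only [r, ha, hc, hcU, ↓reduceIte]
    split_ifs <;> norm_num
  have hbefore : ∀ i < U.card, trajectory (greedy r b) i ≠ U := fun i hi h => by
    have := (trajectory_greedy_subset (d := b) hU_first hi.le).2; rw [h] at this; omega
  have hb_mem : b ∈ trajectory (Function.update (greedy r b) U b) SK.card :=
    mem_trajectory_update hbefore (trajectory_greedy_card_eq hU_first) (card_lt_card hU)
  refine ⟨detPolicy (greedy r b), detPolicy (Function.update (greedy r b) U b),
    isSetSufficientPolicy_detPolicy fun S hS => greedy_notMem (hfree S (by omega)),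
    isSetSufficientPolicy_detPolicy fun S hS => ?_,
    fun S hS a => by rw [detPolicy, detPolicy, Function.update_of_ne hS], ?_⟩
  · by_cases h : S = U
    · rwa [h, Function.update_self]
    · rw [Function.update_of_ne h]; exact greedy_notMem (hfree S (by omega))
  · rw [setProb_detPolicy, setProb_detPolicy, trajectory_greedy_card_eq hSK_first,
      if_pos rfl, if_neg (ne_of_mem_of_not_mem' hb_mem hb)]
    exact one_ne_zero

/-- subset-query lower bound adversary. For any proper subset
`U ⊊ S_K`, there exist two set-sufficient policies that agree at every subset
other than `U` yet assign different unordered propensities to `S_K`; hence any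
exact deterministic subset-oracle algorithm must query all `2^K − 1` proper
subsets of `S_K` in the worst case. -/
theorem stmt_13 {M K : ℕ} (hK : 0 < K) (hKM : K < M)
    (SK : Finset (Fin M)) (hSK : SK.card = K)
    (U : Finset (Fin M)) (hU : U ⊂ SK) :
    ∃ μ₁ μ₂ : Finset (Fin M) → Fin M → ℝ,
      IsSetSufficientPolicy K μ₁ ∧ IsSetSufficientPolicy K μ₂ ∧
      (∀ S : Finset (Fin M), S ≠ U → ∀ a, μ₁ S a = μ₂ S a) ∧
      setProb μ₁ SK ≠ setProb μ₂ SK :=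
  stmt_13_general hKM SK hSK U hU
end

section
/- Let Ω be a finite set, P_π ≪ P_β pmfs, q : Ω → Z, g : Z → ℝ. Then Var_β(w(q)g(q)) ≤ Var_β(ρ g(q)), where ρ = P_π/P_β (zero off supp P_β) and w(z) = F_π(z)/F_β(z) (zero when F_β(z)=0). Equality holds if and only if for P_β-almost every ω, ρ(ω) = w(q(ω)) on every fiber where g(q(ω)) ≠ 0. -/
/-!
Write `f = ρ · g(q)` and `h = w(q) · g(q)`. On each fiber of `q`, the `P_β`-weighted sum of
`ρ - w(q)` is `F_π - w F_β = 0`, so `f - h` is `P_β`-orthogonal to every function of `q`, in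
particular to the constants and to `h` itself. Hence `f` and `h` have the same mean and, by
Pythagoras, `Var f = Var h + ∑ P_β (f - h)²`; the last sum vanishes exactly when `f = h` on the
support of `P_β`.
-/

open Finset

section WeightedSums

variable {Ω : Type*}

theorem sum_mul_div_sub_div_sum_eq_zero (s : Finset Ω) {a b : Ω → ℝ}
    (hb : ∀ ω ∈ s, 0 ≤ b ω) (hab : ∀ ω ∈ s, b ω = 0 → a ω = 0) :
    ∑ ω ∈ s, b ω * (a ω / b ω - (∑ ω ∈ s, a ω) / ∑ ω ∈ s, b ω) = 0 := by
  have hsum : ∑ ω ∈ s, b ω = 0 → ∑ ω ∈ s, a ω = 0 := fun h =>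
    sum_eq_zero fun ω hω => hab ω hω ((sum_eq_zero_iff_of_nonneg hb).mp h ω hω)
  calc ∑ ω ∈ s, b ω * (a ω / b ω - (∑ ω ∈ s, a ω) / ∑ ω ∈ s, b ω)
      = ∑ ω ∈ s, a ω - (∑ ω ∈ s, b ω) * ((∑ ω ∈ s, a ω) / ∑ ω ∈ s, b ω) := by
        rw [sum_mul, ← sum_sub_distrib]
        exact sum_congr rfl fun ω hω => by
          rw [mul_sub, mul_div_cancel_of_imp' (hab ω hω)]
    _ = 0 := by rw [mul_div_cancel_of_imp' hsum, sub_self]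

variable [Fintype Ω]

theorem sum_mul_comp_eq_zero_of_sum_fiber_eq_zero {Z : Type*} [DecidableEq Z]
    (f : Ω → ℝ) (q : Ω → Z) (hf : ∀ z, ∑ ω ∈ univ.filter (fun ω => q ω = z), f ω = 0)
    (k : Z → ℝ) : ∑ ω, f ω * k (q ω) = 0 := by
  rw [← sum_fiberwise_of_maps_to (t := univ.image q) (fun ω _ => mem_image_of_mem q (mem_univ ω))]
  refine sum_eq_zero fun z _ => ?_
  rw [sum_congr rfl fun ω hω => by rw [(mem_filter.mp hω).2], ← sum_mul, hf, zero_mul]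

theorem sum_mul_sq_sub_eq_of_orthogonal (p f h : Ω → ℝ) (c : ℝ)
    (horth : ∑ ω, p ω * (f ω - h ω) * (h ω - c) = 0) :
    ∑ ω, p ω * (f ω - c) ^ 2 = ∑ ω, p ω * (h ω - c) ^ 2 + ∑ ω, p ω * (f ω - h ω) ^ 2 := by
  calc ∑ ω, p ω * (f ω - c) ^ 2
      = ∑ ω, (p ω * (h ω - c) ^ 2 + p ω * (f ω - h ω) ^ 2 + 2 * (p ω * (f ω - h ω) * (h ω - c))) :=
        sum_congr rfl fun ω _ => by ring
    _ = _ := by rw [sum_add_distrib, sum_add_distrib, ← mul_sum, horth, mul_zero, add_zero]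

theorem sum_mul_sq_eq_zero_iff {p : Ω → ℝ} (hp : ∀ ω, 0 ≤ p ω) (d : Ω → ℝ) :
    ∑ ω, p ω * d ω ^ 2 = 0 ↔ ∀ ω, 0 < p ω → d ω = 0 := by
  rw [sum_eq_zero_iff_of_nonneg fun ω _ => mul_nonneg (hp ω) (sq_nonneg _)]
  refine forall_congr' fun ω => ?_
  simp only [mem_univ, true_implies, mul_eq_zero, pow_eq_zero_iff two_ne_zero]
  exact ⟨fun h hpos => h.resolve_left hpos.ne', fun h => (hp ω).eq_or_lt.imp Eq.symm h⟩

end WeightedSums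

theorem stmt_15_general {Ω Z : Type*} [Fintype Ω] [DecidableEq Z]
    (Pπ Pβ : Ω → ℝ)
    (hβ0 : ∀ ω, 0 ≤ Pβ ω)
    (hac : ∀ ω, Pβ ω = 0 → Pπ ω = 0)
    (q : Ω → Z) (g : Z → ℝ)
    (Fπ Fβ : Z → ℝ)
    (hFπ : ∀ z, Fπ z = ∑ ω ∈ univ.filter (fun ω => q ω = z), Pπ ω)
    (hFβ : ∀ z, Fβ z = ∑ ω ∈ univ.filter (fun ω => q ω = z), Pβ ω)
    (ρ : Ω → ℝ)
    (hρ : ∀ ω, ρ ω = if Pβ ω = 0 then 0 else Pπ ω / Pβ ω)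
    (w : Z → ℝ)
    (hw : ∀ z, w z = if Fβ z = 0 then 0 else Fπ z / Fβ z)
    (E : (Ω → ℝ) → ℝ) (hE : ∀ f, E f = ∑ ω, Pβ ω * f ω)
    (V : (Ω → ℝ) → ℝ) (hV : ∀ f, V f = E (fun ω => (f ω - E f) ^ 2)) :
    V (fun ω => w (q ω) * g (q ω)) ≤ V (fun ω => ρ ω * g (q ω)) ∧
    (V (fun ω => w (q ω) * g (q ω)) = V (fun ω => ρ ω * g (q ω)) ↔
      ∀ ω, 0 < Pβ ω → g (q ω) ≠ 0 → ρ ω = w (q ω)) := by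
  have hρ' (ω : Ω) : ρ ω = Pπ ω / Pβ ω := by rw [hρ]; split_ifs with h <;> simp [h]
  have hw' (z : Z) : w z = Fπ z / Fβ z := by rw [hw]; split_ifs with h <;> simp [h]
  have horth : ∀ k : Z → ℝ, ∑ ω, Pβ ω * (ρ ω - w (q ω)) * k (q ω) = 0 := by
    refine sum_mul_comp_eq_zero_of_sum_fiber_eq_zero _ q fun z => ?_
    rw [sum_congr rfl fun ω hω => by rw [(mem_filter.mp hω).2, hρ', hw', hFπ, hFβ]]
    exact sum_mul_div_sub_div_sum_eq_zero _ (fun ω _ => hβ0 ω) (fun ω _ => hac ω)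
  have hmean : E (fun ω => ρ ω * g (q ω)) = E (fun ω => w (q ω) * g (q ω)) := by
    rw [hE, hE, ← sub_eq_zero, ← sum_sub_distrib, ← horth g]
    exact sum_congr rfl fun ω _ => by ring
  have hpyth : V (fun ω => ρ ω * g (q ω)) = V (fun ω => w (q ω) * g (q ω)) +
      ∑ ω, Pβ ω * (ρ ω * g (q ω) - w (q ω) * g (q ω)) ^ 2 := by
    rw [hV, hV, hmean]
    generalize E (fun ω => w (q ω) * g (q ω)) = m
    rw [hE, hE]
    refine sum_mul_sq_sub_eq_of_orthogonal _ _ _ m ?_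
    rw [← horth fun z => g z * (w z * g z - m)]
    exact sum_congr rfl fun ω _ => by ring
  rw [hpyth]
  refine ⟨le_add_of_nonneg_right (sum_nonneg fun ω _ => mul_nonneg (hβ0 ω) (sq_nonneg _)), ?_⟩
  rw [left_eq_add, sum_mul_sq_eq_zero_iff hβ0]
  exact forall₂_congr fun ω _ => by
    rw [← sub_mul, mul_eq_zero, sub_eq_zero, or_iff_not_imp_right]

/-- Rao–Blackwell variance inequality for quotient weighting, with
the exact equality condition. -/
theorem stmt_15 {Ω Z : Type*} [Fintype Ω] [Fintype Z] [DecidableEq Z]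
    (Pπ Pβ : Ω → ℝ)
    (hπ0 : ∀ ω, 0 ≤ Pπ ω) (hβ0 : ∀ ω, 0 ≤ Pβ ω)
    (hπ1 : ∑ ω, Pπ ω = 1) (hβ1 : ∑ ω, Pβ ω = 1)
    (hac : ∀ ω, Pβ ω = 0 → Pπ ω = 0)
    (q : Ω → Z) (g : Z → ℝ)
    (Fπ Fβ : Z → ℝ)
    (hFπ : ∀ z, Fπ z = ∑ ω ∈ univ.filter (fun ω => q ω = z), Pπ ω)
    (hFβ : ∀ z, Fβ z = ∑ ω ∈ univ.filter (fun ω => q ω = z), Pβ ω)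
    (ρ : Ω → ℝ)
    (hρ : ∀ ω, ρ ω = if Pβ ω = 0 then 0 else Pπ ω / Pβ ω)
    (w : Z → ℝ)
    (hw : ∀ z, w z = if Fβ z = 0 then 0 else Fπ z / Fβ z)
    (E : (Ω → ℝ) → ℝ) (hE : ∀ f, E f = ∑ ω, Pβ ω * f ω)
    (V : (Ω → ℝ) → ℝ) (hV : ∀ f, V f = E (fun ω => (f ω - E f) ^ 2)) :
    V (fun ω => w (q ω) * g (q ω)) ≤ V (fun ω => ρ ω * g (q ω)) ∧
    (V (fun ω => w (q ω) * g (q ω)) = V (fun ω => ρ ω * g (q ω)) ↔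
      ∀ ω, 0 < Pβ ω → g (q ω) ≠ 0 → ρ ω = w (q ω)) :=
  stmt_15_general Pπ Pβ hβ0 hac q g Fπ Fβ hFπ hFβ ρ hρ w hw E hE V hV
end
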